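/- Under Foata's fundamental transformation mapping π to σ, every strong fixed point of π maps to a skew strong fixed point of σ, and conversely; in particular the number of strong fixed points of π equals the number of skew strong fixed points of σ. -/

import Mathlib

/-!
The Foata word lists the cycles of `π`, each starting at its minimum, in decreasing order of
minima, and `σ⁻¹` sends a value to its position in that word.

A strong fixed point `i` is a singleton cycle, and `π` preserves `{x < i}` and `{x > i}`; so the
cycles listed before `i` lie above `i` and those after it lie below: `σ⁻¹ i` is a skew strong
fixed point of `σ`. Conversely, the value `v` at a skew strong fixed point is smaller than
everything before it, so it is the minimum of its cycle (which is listed first), and larger than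
everything after it, which includes the rest of its cycle, so that rest is empty: `v` is fixed.
The word then reads (cycles above `v`) `v` (cycles below `v`), and since each part is
`π`-stable, `v` is a strong fixed point.
-/

open Classical in
/-- The one-line word of Foata's fundamental transformation: write each cycle of `π`
with its smallest element first, sort the cycles in descending order of their first
elements, and erase the parentheses. -/
noncomputable def foataWord {n : ℕ} (π : Equiv.Perm (Fin n)) : List (Fin n) :=
  (((List.finRange n).filter (fun m => decide (∀ k : ℕ, m ≤ (π ^ k) m))).reverse).flatMap
    (fun m => (List.range (Function.minimalPeriod (⇑π) m)).map (fun k => (π ^ k) m))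

/-- Foata's fundamental transformation as a map on permutations. -/
noncomputable def foataPerm {n : ℕ} (π : Equiv.Perm (Fin n)) : Equiv.Perm (Fin n) :=
  if h : ∃ σ : Equiv.Perm (Fin n), List.ofFn ⇑σ = foataWord π then h.choose else 1

/-- `i` is a strong fixed point of `π`. -/
def IsStrongFixedPoint {n : ℕ} (π : Equiv.Perm (Fin n)) (i : Fin n) : Prop :=
  π i = i ∧ (∀ j, j < i → π j < π i) ∧ ∀ j, i < j → π i < π j

/-- `j` is a skew strong fixed point of `σ`. -/
def IsSkewStrongFixedPoint {n : ℕ} (σ : Equiv.Perm (Fin n)) (j : Fin n) : Prop :=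
  (∀ l, l < j → σ j < σ l) ∧ ∀ l, j < l → σ l < σ j

namespace Foata

open Function List Equiv

section CycleWord

variable {α : Type*} (π : Perm α)

noncomputable def cycleWord (m : α) : List α :=
  (range (minimalPeriod π m)).map fun k => (π ^ k) m

theorem coe_cycleWord (m : α) : (cycleWord π m : Cycle α) = periodicOrbit π m := by
  simp only [cycleWord, periodicOrbit, Perm.coe_pow]

theorem _root_.Equiv.Perm.mem_periodicPts [Finite α] (x : α) : x ∈ periodicPts π :=
  mk_mem_periodicPts (orderOf_pos π) <| by
    rw [IsPeriodicPt, ← Perm.coe_pow, pow_orderOf_eq_one]; rfl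

variable {π}

theorem mem_cycleWord [Finite α] {m x : α} : x ∈ cycleWord π m ↔ π.SameCycle m x := by
  rw [← Cycle.mem_coe_iff, coe_cycleWord, mem_periodicOrbit_iff (π.mem_periodicPts m)]
  simp only [← Perm.coe_pow]
  exact ⟨fun ⟨k, hk⟩ => ⟨k, by simpa using hk⟩, Perm.SameCycle.exists_nat_pow_eq⟩

theorem nodup_cycleWord (m : α) : (cycleWord π m).Nodup := by
  rw [← Cycle.nodup_coe_iff, coe_cycleWord]
  exact nodup_periodicOrbit

theorem exists_cycleWord_eq_cons [Finite α] (m : α) : ∃ t, cycleWord π m = m :: t := by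
  obtain ⟨T, hT⟩ := Nat.exists_eq_add_one_of_ne_zero
    (minimalPeriod_pos_of_mem_periodicPts (π.mem_periodicPts m)).ne'
  exact ⟨_, by rw [cycleWord, hT, range_succ_eq_map, map_cons, pow_zero, Perm.one_apply]⟩

theorem cycleWord_eq_singleton {m : α} (h : π m = m) : cycleWord π m = [m] := by
  rw [cycleWord, minimalPeriod_eq_one_iff_isFixedPt.2 h]
  rfl

theorem apply_mem_flatMap_cycleWord [Finite α] {L : List α} {x : α}
    (hx : x ∈ L.flatMap (cycleWord π)) : π x ∈ L.flatMap (cycleWord π) := by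
  simp only [mem_flatMap, mem_cycleWord, Perm.sameCycle_apply_right] at hx ⊢
  exact hx

end CycleWord

section CycleMin

variable {α : Type*} {π : Perm α}

def IsCycleMin [Preorder α] (π : Perm α) (m : α) : Prop := ∀ k : ℕ, m ≤ (π ^ k) m

theorem IsCycleMin.le_of_sameCycle [Preorder α] [Finite α] {m x : α} (hm : IsCycleMin π m)
    (h : π.SameCycle m x) : m ≤ x := by
  obtain ⟨k, rfl⟩ := h.exists_nat_pow_eq
  exact hm k

theorem IsCycleMin.eq_of_sameCycle [PartialOrder α] [Finite α] {m m' : α}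
    (hm : IsCycleMin π m) (hm' : IsCycleMin π m') (h : π.SameCycle m m') : m = m' :=
  (hm.le_of_sameCycle h).antisymm (hm'.le_of_sameCycle h.symm)

theorem exists_isCycleMin_sameCycle [LinearOrder α] [Finite α] (π : Perm α) (x : α) :
    ∃ m, IsCycleMin π m ∧ π.SameCycle m x := by
  obtain ⟨m, hxm, hmin⟩ := Set.exists_min_image {y | π.SameCycle x y} id (Set.toFinite _)
    ⟨x, Perm.SameCycle.refl π x⟩
  exact ⟨m, fun k => hmin _ (Perm.sameCycle_pow_right.2 hxm), hxm.symm⟩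

theorem IsCycleMin.of_apply_eq_self [Preorder α] {m : α} (h : π m = m) : IsCycleMin π m :=
  fun k => (Perm.pow_apply_eq_self_of_apply_eq_self h k).ge

end CycleMin

section OneLineWord

variable {n : ℕ}

theorem symm_lt_symm_of_ofFn_eq_append {α : Type*} {σ : Fin n ≃ α} {L₁ L₂ : List α} {x y : α}
    (h : ofFn σ = L₁ ++ L₂) (hx : x ∈ L₁) (hy : y ∈ L₂) : σ.symm x < σ.symm y := by
  obtain ⟨p, hp, rfl⟩ := mem_iff_getElem.1 hx
  obtain ⟨q, hq, rfl⟩ := mem_iff_getElem.1 hy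
  have hlen : L₁.length + L₂.length = n := by simpa using (congrArg length h).symm
  have hσ (k : ℕ) (hk : k < n) : σ ⟨k, hk⟩ = (L₁ ++ L₂)[k]'(by simpa [hlen]) := by
    rw [← getElem_of_eq h (by simpa), List.getElem_ofFn]
  have hpx : σ.symm L₁[p] = ⟨p, by omega⟩ := by
    rw [σ.symm_apply_eq, hσ, getElem_append_left]
  have hqy : σ.symm L₂[q] = ⟨L₁.length + q, by omega⟩ := by
    rw [σ.symm_apply_eq, hσ, getElem_append_right (by omega)]
    simp
  rw [hpx, hqy, Fin.mk_lt_mk]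
  omega

theorem isSkewStrongFixedPoint_symm_iff {σ : Perm (Fin n)} {X Y : List (Fin n)} {v : Fin n}
    (h : ofFn σ = X ++ v :: Y) :
    IsSkewStrongFixedPoint σ (σ.symm v) ↔ (∀ x ∈ X, v < x) ∧ ∀ y ∈ Y, y < v := by
  have hX : ∀ x ∈ X, σ.symm x < σ.symm v :=
    fun x hx => symm_lt_symm_of_ofFn_eq_append h hx mem_cons_self
  have hY : ∀ y ∈ Y, σ.symm v < σ.symm y :=
    fun y hy => symm_lt_symm_of_ofFn_eq_append (L₁ := X ++ [v]) (by simpa using h) (by simp) hy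
  have hmem (x : Fin n) : x ∈ X ∨ x = v ∨ x ∈ Y := by
    simpa [h] using mem_ofFn.2 ⟨σ.symm x, σ.apply_symm_apply x⟩
  constructor
  · rintro ⟨hlt, hgt⟩
    exact ⟨fun x hx => by simpa using hlt _ (hX x hx), fun y hy => by simpa using hgt _ (hY y hy)⟩
  · rintro ⟨hXv, hYv⟩
    refine ⟨fun l hl => ?_, fun l hl => ?_⟩ <;> obtain ⟨x, rfl⟩ := σ.symm.surjective l <;>
      simp only [Equiv.apply_symm_apply] <;> rcases hmem x with hx | rfl | hx
    · exact hXv x hx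
    · exact absurd hl (lt_irrefl _)
    · exact absurd hl (lt_asymm (hY x hx))
    · exact absurd (hX x hx) (lt_asymm hl)
    · exact absurd hl (lt_irrefl _)
    · exact hYv x hx

end OneLineWord

section FoataWord

variable {n : ℕ} {π : Perm (Fin n)}

open Classical in
noncomputable def cycleMins (π : Perm (Fin n)) : List (Fin n) :=
  ((finRange n).filter fun m => decide (∀ k : ℕ, m ≤ (π ^ k) m)).reverse

theorem foataWord_eq_flatMap (π : Perm (Fin n)) :
    foataWord π = (cycleMins π).flatMap (cycleWord π) :=
  rfl

theorem mem_cycleMins {m : Fin n} : m ∈ cycleMins π ↔ IsCycleMin π m := by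
  simp [cycleMins, IsCycleMin]

theorem pairwise_gt_cycleMins (π : Perm (Fin n)) : (cycleMins π).Pairwise (· > ·) := by
  rw [cycleMins, pairwise_reverse]
  exact (pairwise_lt_finRange n).filter _

theorem mem_foataWord (π : Perm (Fin n)) (x : Fin n) : x ∈ foataWord π := by
  obtain ⟨m, hm, hmx⟩ := exists_isCycleMin_sameCycle π x
  rw [foataWord_eq_flatMap, mem_flatMap]
  exact ⟨m, mem_cycleMins.2 hm, mem_cycleWord.2 hmx⟩

theorem nodup_foataWord (π : Perm (Fin n)) : (foataWord π).Nodup := by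
  rw [foataWord_eq_flatMap, nodup_flatMap]
  refine ⟨fun m _ => nodup_cycleWord m, ?_⟩
  refine (pairwise_gt_cycleMins π).imp_of_mem fun {a b} ha hb hab => ?_
  rw [onFun, disjoint_left]
  intro x hxa hxb
  exact hab.ne' <| (mem_cycleMins.1 ha).eq_of_sameCycle (mem_cycleMins.1 hb)
    ((mem_cycleWord.1 hxa).trans (mem_cycleWord.1 hxb).symm)

theorem ofFn_foataPerm (π : Perm (Fin n)) : ofFn (foataPerm π) = foataWord π := by
  classical
  let e := (nodup_foataWord π).getEquivOfForallMemList _ (mem_foataWord π)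
  have hlen : (foataWord π).length = n := Fin.equiv_iff_eq.1 ⟨e⟩
  have hσ : ∃ σ : Perm (Fin n), ofFn σ = foataWord π :=
    ⟨(finCongr hlen.symm).trans e, ext_getElem (by simp [hlen]) fun i _ _ => by simp [e]⟩
  rw [foataPerm, dif_pos hσ]
  exact hσ.choose_spec

theorem foataWord_eq_append {v : Fin n} (hv : IsCycleMin π v) :
    ∃ P Q : List (Fin n), (∀ m ∈ P, v < m) ∧ (∀ m ∈ Q, m < v) ∧
      foataWord π = P.flatMap (cycleWord π) ++ (cycleWord π v ++ Q.flatMap (cycleWord π)) := by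
  obtain ⟨P, Q, hPQ⟩ := append_of_mem (mem_cycleMins.2 hv)
  have hsorted := pairwise_gt_cycleMins π
  rw [hPQ, pairwise_append, pairwise_cons] at hsorted
  refine ⟨P, Q, fun m hm => hsorted.2.2 m hm v mem_cons_self, hsorted.2.1.1, ?_⟩
  rw [foataWord_eq_flatMap, hPQ, flatMap_append, flatMap_cons]

end FoataWord

end Foata

section StrongFixedPoint

open Equiv List Foata

variable {n : ℕ} {π : Perm (Fin n)} {i : Fin n}

theorem IsStrongFixedPoint.mapsTo_Ioi (hi : IsStrongFixedPoint π i) :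
    Set.MapsTo π (Set.Ioi i) (Set.Ioi i) :=
  fun x hx => hi.1 ▸ hi.2.2 x hx

theorem IsStrongFixedPoint.mapsTo_Iio (hi : IsStrongFixedPoint π i) :
    Set.MapsTo π (Set.Iio i) (Set.Iio i) :=
  fun x hx => hi.1 ▸ hi.2.1 x hx

theorem IsStrongFixedPoint.lt_of_sameCycle (hi : IsStrongFixedPoint π i) {m x : Fin n}
    (h : π.SameCycle m x) (hm : i < m) : i < x := by
  obtain ⟨k, rfl⟩ := h.exists_nat_pow_eq
  rw [Perm.coe_pow]
  exact hi.mapsTo_Ioi.iterate k hm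

theorem IsStrongFixedPoint.gt_of_sameCycle (hi : IsStrongFixedPoint π i) {m x : Fin n}
    (h : π.SameCycle m x) (hm : m < i) : x < i := by
  obtain ⟨k, rfl⟩ := h.exists_nat_pow_eq
  rw [Perm.coe_pow]
  exact hi.mapsTo_Iio.iterate k hm

theorem IsStrongFixedPoint.isSkewStrongFixedPoint_foataPerm
    (hi : IsStrongFixedPoint π i) :
    IsSkewStrongFixedPoint (foataPerm π) ((foataPerm π).symm i) := by
  obtain ⟨P, Q, hP, hQ, hw⟩ := foataWord_eq_append (IsCycleMin.of_apply_eq_self hi.1)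
  rw [cycleWord_eq_singleton hi.1] at hw
  refine (isSkewStrongFixedPoint_symm_iff ((ofFn_foataPerm π).trans hw)).2 ⟨?_, ?_⟩
  all_goals
    intro x hx
    obtain ⟨m, hm, hmx⟩ := mem_flatMap.1 hx
  · exact hi.lt_of_sameCycle (mem_cycleWord.1 hmx) (hP m hm)
  · exact hi.gt_of_sameCycle (mem_cycleWord.1 hmx) (hQ m hm)

theorem isStrongFixedPoint_of_foataWord_eq {P Q : List (Fin n)} {v : Fin n}
    (hw : foataWord π = P.flatMap (cycleWord π) ++ v :: Q.flatMap (cycleWord π))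
    (hv : π v = v) (hP : ∀ x ∈ P.flatMap (cycleWord π), v < x)
    (hQ : ∀ y ∈ Q.flatMap (cycleWord π), y < v) : IsStrongFixedPoint π v := by
  have hmem (x : Fin n) : x ∈ P.flatMap (cycleWord π) ∨ x = v ∨ x ∈ Q.flatMap (cycleWord π) := by
    simpa only [hw, mem_append, mem_cons] using mem_foataWord π x
  refine ⟨hv, fun x hx => ?_, fun x hx => ?_⟩ <;> rw [hv] <;> rcases hmem x with h | rfl | h
  · exact absurd hx (lt_asymm (hP x h))
  · exact absurd hx (lt_irrefl x)
  · exact hQ _ (apply_mem_flatMap_cycleWord h)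
  · exact hP _ (apply_mem_flatMap_cycleWord h)
  · exact absurd hx (lt_irrefl x)
  · exact absurd (hQ x h) (lt_asymm hx)

theorem isStrongFixedPoint_of_isSkewStrongFixedPoint_foataPerm {v : Fin n}
    (hv : IsSkewStrongFixedPoint (foataPerm π) ((foataPerm π).symm v)) :
    IsStrongFixedPoint π v := by
  set σ := foataPerm π
  obtain ⟨m, hm, hmv⟩ := exists_isCycleMin_sameCycle π v
  obtain ⟨P, Q, -, -, hw⟩ := foataWord_eq_append hm
  obtain ⟨t, ht⟩ := exists_cycleWord_eq_cons (π := π) m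
  have after_min (x : Fin n) (hx : x ∈ t) : σ.symm m < σ.symm x := by
    refine symm_lt_symm_of_ofFn_eq_append (L₁ := P.flatMap (cycleWord π) ++ [m])
      (L₂ := t ++ Q.flatMap (cycleWord π)) ?_ (by simp) (by simp [hx])
    rw [ofFn_foataPerm, hw, ht]
    simp
  have hvm : v = m := by
    by_contra hne
    have hvt : v ∈ t := by simpa [ht, hne] using mem_cycleWord.2 hmv
    have hlt : v < m := by simpa using hv.1 _ (after_min v hvt)
    exact absurd (hm.le_of_sameCycle hmv) (not_le.2 hlt)
  subst hvm
  have hfix : π v = v := by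
    by_contra hne
    have hπv : π v ∈ t := by
      simpa [ht, hne] using mem_cycleWord.2 (Perm.SameCycle.refl π v).apply_right
    have hlt : π v < v := by simpa using hv.2 _ (after_min _ hπv)
    exact absurd (hm 1) (by simpa using hlt)
  rw [cycleWord_eq_singleton hfix] at hw
  obtain ⟨hP, hQ⟩ := (isSkewStrongFixedPoint_symm_iff ((ofFn_foataPerm π).trans hw)).1 hv
  exact isStrongFixedPoint_of_foataWord_eq hw hfix hP hQ

theorem isStrongFixedPoint_iff_isSkewStrongFixedPoint_foataPerm (π : Perm (Fin n)) (i : Fin n) :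
    IsStrongFixedPoint π i ↔ IsSkewStrongFixedPoint (foataPerm π) ((foataPerm π).symm i) :=
  ⟨IsStrongFixedPoint.isSkewStrongFixedPoint_foataPerm,
    isStrongFixedPoint_of_isSkewStrongFixedPoint_foataPerm⟩

end StrongFixedPoint

/-- Under Foata's fundamental transformation `π ↦ σ`, strong fixed points of `π`
correspond to skew strong fixed points of `σ`; in particular their numbers agree. -/
theorem foata_strong_fixed_points {n : ℕ} (π σ : Equiv.Perm (Fin n))
    (h : σ = foataPerm π) :
    (∀ i : Fin n, IsStrongFixedPoint π i →
        ∃ j : Fin n, σ j = π i ∧ IsSkewStrongFixedPoint σ j) ∧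
    (∀ j : Fin n, IsSkewStrongFixedPoint σ j →
        ∃ i : Fin n, IsStrongFixedPoint π i ∧ π i = σ j) ∧
    Nat.card {i : Fin n // IsStrongFixedPoint π i} =
      Nat.card {j : Fin n // IsSkewStrongFixedPoint σ j} := by
  subst h
  have key := isStrongFixedPoint_iff_isSkewStrongFixedPoint_foataPerm π
  refine ⟨fun i hi => ⟨_, by simp [hi.1], (key i).1 hi⟩, fun j hj => ?_, ?_⟩
  · have hstrong : IsStrongFixedPoint π (foataPerm π j) := (key _).2 (by simpa using hj)
    exact ⟨_, hstrong, hstrong.1⟩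
  · exact Nat.card_congr ((foataPerm π).symm.subtypeEquiv key)
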